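/- Let G be a finite nonabelian transitively commutative group with trivial center. Then any two distinct maximal abelian subgroups of G intersect trivially. -/

import Mathlib

/-! A nontrivial element `g` lying in two maximal abelian subgroups `M` and `M'` is noncentral, so
its centralizer is abelian; both `M` and `M'` lie in that centralizer, hence by maximality both
are equal to it. -/

namespace Subgroup

variable {G : Type*} [Group G]

def IsMaximalAbelian (M : Subgroup G) : Prop :=
  (∀ x ∈ M, ∀ y ∈ M, x * y = y * x) ∧
    ∀ N : Subgroup G, (∀ x ∈ N, ∀ y ∈ N, x * y = y * x) → M ≤ N → M = N

theorem le_centralizer_singleton_of_mem {M : Subgroup G}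
    (hM : ∀ x ∈ M, ∀ y ∈ M, x * y = y * x) {g : G} (hg : g ∈ M) :
    M ≤ centralizer {g} := fun x hx =>
  mem_centralizer_singleton_iff.mpr (hM x hx g hg)

theorem IsMaximalAbelian.eq_centralizer_singleton {M : Subgroup G} (hM : M.IsMaximalAbelian)
    {g : G} (hg : g ∈ M)
    (hcomm : ∀ x ∈ centralizer {g}, ∀ y ∈ centralizer {g}, x * y = y * x) :
    M = centralizer {g} :=
  hM.2 _ hcomm (le_centralizer_singleton_of_mem hM.1 hg)

end Subgroup

theorem tc_trivial_center_maximal_abelian_trivial_intersection_general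
    (G : Type*) [Group G]
    (hTC : ∀ g : G, g ∉ Subgroup.center G →
      ∀ x ∈ Subgroup.centralizer {g}, ∀ y ∈ Subgroup.centralizer {g}, x * y = y * x)
    (hZ : Subgroup.center G = ⊥) (M M' : Subgroup G)
    (hM : (∀ x ∈ M, ∀ y ∈ M, x * y = y * x) ∧
      ∀ N : Subgroup G, (∀ x ∈ N, ∀ y ∈ N, x * y = y * x) → M ≤ N → M = N)
    (hM' : (∀ x ∈ M', ∀ y ∈ M', x * y = y * x) ∧
      ∀ N : Subgroup G, (∀ x ∈ N, ∀ y ∈ N, x * y = y * x) → M' ≤ N → M' = N)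
    (hne : M ≠ M') :
    M ⊓ M' = ⊥ := by
  refine (Subgroup.eq_bot_iff_forall _).mpr fun g hg => ?_
  by_contra hg1
  have hgZ : g ∉ Subgroup.center G := by
    rwa [hZ, Subgroup.mem_bot]
  have hcomm := hTC g hgZ
  exact hne <| (Subgroup.IsMaximalAbelian.eq_centralizer_singleton hM hg.1 hcomm).trans
    (Subgroup.IsMaximalAbelian.eq_centralizer_singleton hM' hg.2 hcomm).symm

/-- In a finite nonabelian transitively commutative group with trivial center,
distinct maximal abelian subgroups intersect trivially. -/
theorem tc_trivial_center_maximal_abelian_trivial_intersection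
    (G : Type*) [Group G] [Finite G]
    (hnonab : ¬ ∀ a b : G, a * b = b * a)
    (hTC : ∀ g : G, g ∉ Subgroup.center G →
      ∀ x ∈ Subgroup.centralizer {g}, ∀ y ∈ Subgroup.centralizer {g}, x * y = y * x)
    (hZ : Subgroup.center G = ⊥) (M M' : Subgroup G)
    (hM : (∀ x ∈ M, ∀ y ∈ M, x * y = y * x) ∧
      ∀ N : Subgroup G, (∀ x ∈ N, ∀ y ∈ N, x * y = y * x) → M ≤ N → M = N)
    (hM' : (∀ x ∈ M', ∀ y ∈ M', x * y = y * x) ∧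
      ∀ N : Subgroup G, (∀ x ∈ N, ∀ y ∈ N, x * y = y * x) → M' ≤ N → M' = N)
    (hne : M ≠ M') :
    M ⊓ M' = ⊥ :=
  tc_trivial_center_maximal_abelian_trivial_intersection_general G hTC hZ M M' hM hM' hne
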